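/- Let G be the graph product of a finite simple graph Γ = (V,E) with vertex groups (G_v)_{v∈V}, and let P be a modular partition of Γ, with quotient graph Γ̄ = (V̄, Ē) whose vertices are the partition classes A ∈ P and whose edges are the pairs {A,B} such that some (equivalently, every) a ∈ A and b ∈ B are adjacent in Γ. Then G is isomorphic to the graph product of Γ̄ with vertex groups (G(A))_{A∈P}; more precisely, the subgroups G(A) of G generate G and satisfy the defining relations of the graph product over Γ̄, and the induced homomorphism from that graph product to G is an isomorphism. -/

import Mathlib

open Monoid

/-- The set of commutator relators defining a graph product. -/
def graphProdRels {V : Type*} (Γ : SimpleGraph V) (G : V → Type*) [∀ v, Group (G v)] :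
    Set (CoprodI G) :=
  {x | ∃ (u v : V) (_ : Γ.Adj u v) (g : G u) (h : G v),
    x = (CoprodI.of g)⁻¹ * (CoprodI.of h)⁻¹ * CoprodI.of g * CoprodI.of h}

/-- The graph product of the graph of groups `(Γ, G)`: the quotient of the free product of the
vertex groups by the normal closure of the commutators of elements of pairs of adjacent vertex
groups. -/
def GraphProduct {V : Type*} (Γ : SimpleGraph V) (G : V → Type*) [∀ v, Group (G v)] : Type _ :=
  CoprodI G ⧸ Subgroup.normalClosure (graphProdRels Γ G)

instance {V : Type*} (Γ : SimpleGraph V) (G : V → Type*) [∀ v, Group (G v)] :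
    Group (GraphProduct Γ G) :=
  QuotientGroup.Quotient.group _

/-- The canonical map from a vertex group into the graph product. -/
def GraphProduct.of {V : Type*} (Γ : SimpleGraph V) (G : V → Type*) [∀ v, Group (G v)] (v : V) :
    G v →* GraphProduct Γ G :=
  (QuotientGroup.mk' _).comp CoprodI.of

/-- `G(A)`: the subgroup of the graph product generated by the images of the vertex groups
`G_a`, `a ∈ A`. -/
def GraphProduct.vsub {V : Type*} (Γ : SimpleGraph V) (G : V → Type*) [∀ v, Group (G v)]
    (A : Set V) : Subgroup (GraphProduct Γ G) :=
  ⨆ a ∈ A, (GraphProduct.of Γ G a).range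

/-! Send `g ∈ G_v` to `g` itself, viewed in the vertex group `G(A)` of the class `A ∋ v`. This
respects the relations of `Γ`: adjacent vertices lie either in one class, where they already
commute inside `G(A)`, or in two classes adjacent in the quotient graph. Conversely, the
inclusions `G(A) ≤ G` respect the relations of the quotient graph because two disjoint modules
joined by one edge are joined by all edges. Both composites fix generators, so they are inverse. -/

namespace GraphProduct

section UniversalProperty

variable {V : Type*} (Γ : SimpleGraph V) (G : V → Type*) [∀ v, Group (G v)]

theorem of_commute_of_adj {u v : V} (h : Γ.Adj u v) (g : G u) (k : G v) :
    Commute (of Γ G u g) (of Γ G v k) := by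
  have hrel : (of Γ G u g)⁻¹ * (of Γ G v k)⁻¹ * of Γ G u g * of Γ G v k = 1 :=
    (QuotientGroup.eq_one_iff _).2 (Subgroup.subset_normalClosure ⟨u, v, h, g, k, rfl⟩)
  have hinv : Commute (of Γ G u g)⁻¹ (of Γ G v k)⁻¹ := by
    rw [← commutatorElement_eq_one_iff_commute]
    simpa only [commutatorElement_def, inv_inv] using hrel
  simpa only [inv_inv] using hinv.inv_inv

def lift {M : Type*} [Group M] (f : ∀ v, G v →* M)
    (hf : ∀ u v, Γ.Adj u v → ∀ (g : G u) (k : G v), Commute (f u g) (f v k)) :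
    GraphProduct Γ G →* M :=
  QuotientGroup.lift _ (CoprodI.lift f) <| Subgroup.normalClosure_le_normal <| by
    rintro _ ⟨u, v, huv, g, k, rfl⟩
    simp only [SetLike.mem_coe, MonoidHom.mem_ker, map_mul, map_inv, CoprodI.lift_of,
      mul_assoc, (hf u v huv g k).eq, inv_mul_cancel_left, inv_mul_cancel]

@[simp]
theorem lift_of {M : Type*} [Group M] (f : ∀ v, G v →* M)
    (hf : ∀ u v, Γ.Adj u v → ∀ (g : G u) (k : G v), Commute (f u g) (f v k)) (v : V) (g : G v) :
    lift Γ G f hf (of Γ G v g) = f v g :=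
  rfl

@[ext]
theorem hom_ext {M : Type*} [Monoid M] {f f' : GraphProduct Γ G →* M}
    (h : ∀ v, f.comp (of Γ G v) = f'.comp (of Γ G v)) : f = f' :=
  QuotientGroup.monoidHom_ext _ <| CoprodI.ext_hom _ _ h

end UniversalProperty

section VertexSubgroups

variable {V : Type*} (Γ : SimpleGraph V) (G : V → Type*) [∀ v, Group (G v)]

theorem of_mem_vsub {A : Set V} {a : V} (ha : a ∈ A) (g : G a) : of Γ G a g ∈ vsub Γ G A :=
  (le_iSup₂_of_le a ha le_rfl : (of Γ G a).range ≤ vsub Γ G A) ⟨g, rfl⟩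

@[elab_as_elim]
theorem vsub_induction {A : Set V} {motive : ∀ x, x ∈ vsub Γ G A → Prop}
    (of : ∀ a (ha : a ∈ A) (g : G a), motive (of Γ G a g) (of_mem_vsub Γ G ha g))
    (one : motive 1 (one_mem _))
    (mul : ∀ x y hx hy, motive x hx → motive y hy → motive (x * y) (mul_mem hx hy))
    {x : GraphProduct Γ G} (hx : x ∈ vsub Γ G A) : motive x hx := by
  have hA : vsub Γ G A = ⨆ a : A, (GraphProduct.of Γ G a).range := by
    rw [vsub, iSup_subtype']
  rw [hA] at hx
  refine Subgroup.iSup_induction' (C := fun x hx => motive x (hA ▸ hx)) _ ?_ one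
    (fun x y hx hy => mul x y (hA ▸ hx) (hA ▸ hy)) hx
  rintro ⟨a, ha⟩ _ ⟨g, rfl⟩
  exact of a ha g

theorem commute_of_mem_vsub {A B : Set V} (hAB : ∀ a ∈ A, ∀ b ∈ B, Γ.Adj a b)
    {x y : GraphProduct Γ G} (hx : x ∈ vsub Γ G A) (hy : y ∈ vsub Γ G B) : Commute x y := by
  suffices vsub Γ G A ≤ Subgroup.centralizer (vsub Γ G B) from (this hx y hy).symm
  refine iSup₂_le fun a ha => Subgroup.le_centralizer_iff.2 <| iSup₂_le fun b hb => ?_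
  rintro _ ⟨k, rfl⟩ _ ⟨g, rfl⟩
  exact (of_commute_of_adj Γ G (hAB a ha b hb) g k).eq

end VertexSubgroups

section Blocks

variable {V ι : Type*} {Γ : SimpleGraph V} {G : V → Type*} [∀ v, Group (G v)]
  {Δ : SimpleGraph ι} {S : ι → Set V}

theorem of_vsub_congr {i j : ι} (hij : i = j) {x : GraphProduct Γ G} (hi : x ∈ vsub Γ G (S i))
    (hj : x ∈ vsub Γ G (S j)) :
    of Δ (fun i => vsub Γ G (S i)) i ⟨x, hi⟩ = of Δ (fun i => vsub Γ G (S i)) j ⟨x, hj⟩ := by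
  subst hij
  rfl

def fromBlocks (hΔ : ∀ i j, Δ.Adj i j → ∀ a ∈ S i, ∀ b ∈ S j, Γ.Adj a b) :
    GraphProduct Δ (fun i => vsub Γ G (S i)) →* GraphProduct Γ G :=
  lift Δ _ (fun i => (vsub Γ G (S i)).subtype) fun i j hij x y =>
    commute_of_mem_vsub Γ G (hΔ i j hij) x.2 y.2

def toBlocks (c : V → ι) (hc : ∀ v i, v ∈ S i ↔ c v = i)
    (hΓ : ∀ u v, Γ.Adj u v → c u ≠ c v → Δ.Adj (c u) (c v)) :
    GraphProduct Γ G →* GraphProduct Δ (fun i => vsub Γ G (S i)) :=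
  lift Γ G (fun v => (of Δ _ (c v)).comp
      ((of Γ G v).codRestrict _ (of_mem_vsub Γ G ((hc v (c v)).2 rfl)))) fun u v huv g k => by
    by_cases hcuv : c u = c v
    · simp only [MonoidHom.comp_apply, MonoidHom.codRestrict_apply]
      rw [of_vsub_congr hcuv _ (of_mem_vsub Γ G ((hc u (c v)).2 hcuv) g)]
      exact Commute.map (Subtype.ext (of_commute_of_adj Γ G huv g k).eq) _
    · exact of_commute_of_adj Δ _ (hΓ u v huv hcuv) _ _

variable (hΔ : ∀ i j, Δ.Adj i j → ∀ a ∈ S i, ∀ b ∈ S j, Γ.Adj a b) (c : V → ι)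
  (hc : ∀ v i, v ∈ S i ↔ c v = i) (hΓ : ∀ u v, Γ.Adj u v → c u ≠ c v → Δ.Adj (c u) (c v))

@[simp]
theorem fromBlocks_of (i : ι) (x : vsub Γ G (S i)) :
    fromBlocks hΔ (of Δ (fun i => vsub Γ G (S i)) i x) = x :=
  rfl

theorem toBlocks_of_mem_vsub {i : ι} {x : GraphProduct Γ G} (hx : x ∈ vsub Γ G (S i)) :
    toBlocks c hc hΓ x = of Δ (fun i => vsub Γ G (S i)) i ⟨x, hx⟩ := by
  induction hx using vsub_induction with
  | of a ha g => exact of_vsub_congr ((hc a i).1 ha) _ _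
  | one => exact (map_one _).trans (map_one _).symm
  | mul x y hx hy ihx ihy => rw [map_mul, ihx, ihy, ← map_mul]; rfl

theorem fromBlocks_comp_toBlocks :
    (fromBlocks hΔ).comp (toBlocks c hc hΓ) = MonoidHom.id (GraphProduct Γ G) := by
  ext v g
  rfl

theorem toBlocks_comp_fromBlocks :
    (toBlocks (G := G) c hc hΓ).comp (fromBlocks hΔ) = MonoidHom.id _ := by
  ext i x
  exact toBlocks_of_mem_vsub c hc hΓ x.2

def blocksEquiv : GraphProduct Δ (fun i => vsub Γ G (S i)) ≃* GraphProduct Γ G :=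
  MonoidHom.toMulEquiv (fromBlocks hΔ) (toBlocks c hc hΓ) (toBlocks_comp_fromBlocks hΔ c hc hΓ)
    (fromBlocks_comp_toBlocks hΔ c hc hΓ)

end Blocks

end GraphProduct

def SimpleGraph.IsModule {V : Type*} (Γ : SimpleGraph V) (X : Set V) : Prop :=
  ∀ v ∉ X, (∀ x ∈ X, Γ.Adj v x) ∨ (∀ x ∈ X, ¬ Γ.Adj v x)

theorem SimpleGraph.IsModule.adj_of_adj {V : Type*} {Γ : SimpleGraph V} {X Y : Set V}
    (hX : Γ.IsModule X) (hY : Γ.IsModule Y) (hXY : Disjoint X Y) {x₀ y₀ : V} (hx₀ : x₀ ∈ X)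
    (hy₀ : y₀ ∈ Y) (h₀ : Γ.Adj x₀ y₀) {x y : V} (hx : x ∈ X) (hy : y ∈ Y) : Γ.Adj x y := by
  have hy₀X : ∀ x ∈ X, Γ.Adj y₀ x :=
    (hX y₀ (hXY.notMem_of_mem_right hy₀)).resolve_right fun h => h x₀ hx₀ h₀.symm
  have hxY : ∀ y ∈ Y, Γ.Adj x y :=
    (hY x (hXY.notMem_of_mem_left hx)).resolve_right fun h => h y₀ hy₀ (hy₀X x hx).symm
  exact hxY y hy

theorem Setoid.IsPartition.exists_mem_iff_eq {V : Type*} {P : Set (Set V)}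
    (hP : Setoid.IsPartition P) :
    ∃ c : V → P, ∀ v (A : P), v ∈ (A : Set V) ↔ c v = A := by
  choose A hA _ using fun v => hP.2 v
  refine ⟨fun v => ⟨A v, (hA v).1⟩, fun v B => ⟨fun hvB => ?_, ?_⟩⟩
  · exact Subtype.ext (Setoid.eq_of_mem_eqv_class hP.2 (hA v).1 (hA v).2 B.2 hvB)
  · rintro rfl
    exact (hA v).2

theorem graphProduct_modular_partition_general {V : Type*} (Γ : SimpleGraph V)
    (G : V → Type*) [∀ v, Group (G v)]
    (P : Set (Set V)) (hpart : Setoid.IsPartition P)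
    (hmod : ∀ X ∈ P, ∀ v ∉ X, (∀ x ∈ X, Γ.Adj v x) ∨ (∀ x ∈ X, ¬ Γ.Adj v x))
    (ΓQ : SimpleGraph P)
    (hadj : ∀ A B : P, ΓQ.Adj A B ↔
      (A ≠ B ∧ ∃ a ∈ (A : Set V), ∃ b ∈ (B : Set V), Γ.Adj a b)) :
    ∃ φ : GraphProduct ΓQ (fun A : P => GraphProduct.vsub Γ G (A : Set V)) →* GraphProduct Γ G,
      (∀ (A : P) (x : GraphProduct.vsub Γ G (A : Set V)),
        φ (GraphProduct.of ΓQ (fun B : P => GraphProduct.vsub Γ G (B : Set V)) A x) = x) ∧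
      Function.Bijective φ := by
  obtain ⟨c, hc⟩ := hpart.exists_mem_iff_eq
  have hΔ : ∀ A B, ΓQ.Adj A B → ∀ a ∈ (A : Set V), ∀ b ∈ (B : Set V), Γ.Adj a b := by
    intro A B hAB
    obtain ⟨hne, a₀, ha₀, b₀, hb₀, h₀⟩ := (hadj A B).1 hAB
    have hdisj : Disjoint (A : Set V) B :=
      Set.disjoint_left.2 fun v hvA hvB => hne (((hc v A).1 hvA).symm.trans ((hc v B).1 hvB))
    exact fun a ha b hb => SimpleGraph.IsModule.adj_of_adj (hmod A A.2) (hmod B B.2) hdisj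
      ha₀ hb₀ h₀ ha hb
  have hΓ : ∀ u v, Γ.Adj u v → c u ≠ c v → ΓQ.Adj (c u) (c v) := fun u v huv hne =>
    (hadj _ _).2 ⟨hne, u, (hc u _).2 rfl, v, (hc v _).2 rfl, huv⟩
  exact ⟨(GraphProduct.blocksEquiv hΔ c hc hΓ).toMonoidHom, GraphProduct.fromBlocks_of hΔ,
    (GraphProduct.blocksEquiv hΔ c hc hΓ).bijective⟩

/-- Let `P` be a modular partition of `Γ`, with quotient graph `ΓQ` on the
partition classes, two classes being adjacent iff some (equivalently, by modularity, every) pair of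
representatives is adjacent in `Γ`.  Then `G` is the graph product of `(ΓQ, G(A))`: there is a
homomorphism from the graph product of the quotient graph of groups to `G` restricting to the
inclusion on each `G(A)` (so the subgroups `G(A)` generate `G` and satisfy the graph product
relations over `ΓQ`), and this homomorphism is an isomorphism. -/
theorem graphProduct_modular_partition {V : Type*} [Fintype V] (Γ : SimpleGraph V)
    (G : V → Type*) [∀ v, Group (G v)]
    (P : Set (Set V)) (hpart : Setoid.IsPartition P)
    (hmod : ∀ X ∈ P, ∀ v ∉ X, (∀ x ∈ X, Γ.Adj v x) ∨ (∀ x ∈ X, ¬ Γ.Adj v x))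
    (ΓQ : SimpleGraph P)
    (hadj : ∀ A B : P, ΓQ.Adj A B ↔
      (A ≠ B ∧ ∃ a ∈ (A : Set V), ∃ b ∈ (B : Set V), Γ.Adj a b)) :
    ∃ φ : GraphProduct ΓQ (fun A : P => GraphProduct.vsub Γ G (A : Set V)) →* GraphProduct Γ G,
      (∀ (A : P) (x : GraphProduct.vsub Γ G (A : Set V)),
        φ (GraphProduct.of ΓQ (fun B : P => GraphProduct.vsub Γ G (B : Set V)) A x) = x) ∧
      Function.Bijective φ :=
  graphProduct_modular_partition_general Γ G P hpart hmod ΓQ hadj
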